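/- If (X, w) is a weighted unitary t-design in U(d) (t ≥ 1), then |X| ≥ dimHom(d, ⌈t/2⌉, ⌊t/2⌋). -/

import Mathlib

/-! If `f ∈ Hom(r, s)` vanishes on `X`, then `f · f̄ ∈ Hom(r + s, r + s)`, so for `r + s = t` the
design property gives `∫ |f|² = ∑ w(U) |f(U)|² = 0`; as `f` is continuous and the Haar measure
charges every nonempty open set, `f = 0`. Thus restriction to `X` embeds `Hom(⌈t/2⌉, ⌊t/2⌋)`
into `ℂ^X`. -/

open MeasureTheory

noncomputable section

/-- `U(d)`: the group of `d × d` complex unitary matrices. -/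
abbrev UG (d : ℕ) := Matrix.unitaryGroup (Fin d) ℂ

instance (d : ℕ) : MeasurableSpace (UG d) := borel _
instance (d : ℕ) : BorelSpace (UG d) := ⟨rfl⟩

/-- `Hom(r,s)`: the complex span of the monomial functions on `U(d)` that are homogeneous of
degree `r` in the entries of `U` and of degree `s` in the entries of `U*` (conjugates). -/
def homSpace (d r s : ℕ) : Submodule ℂ (UG d → ℂ) :=
  Submodule.span ℂ
    {f : UG d → ℂ | ∃ (i j : Fin r → Fin d) (p q : Fin s → Fin d),
      f = fun U : UG d => (∏ k, (U : Matrix (Fin d) (Fin d) ℂ) (i k) (j k)) *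
        ∏ k, (starRingEnd ℂ) ((U : Matrix (Fin d) (Fin d) ℂ) (p k) (q k))}

/-- A nonempty finite subset `X ⊆ U(d)` is a unitary `t`-design (with respect to the Haar
probability measure `μ`) if it averages every `f ∈ Hom(t,t)` correctly. -/
def IsUnitaryDesign (d t : ℕ) (μ : Measure (UG d)) (X : Finset (UG d)) : Prop :=
  X.Nonempty ∧ ∀ f ∈ homSpace d t t,
    (1 / (X.card : ℂ)) * ∑ U ∈ X, f U = ∫ U, f U ∂μ

/-- `|tr(U* M)|²`, the squared trace inner product of two unitaries. -/
def trIP {d : ℕ} (U M : UG d) : ℝ :=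
  ‖Matrix.trace (star (U : Matrix (Fin d) (Fin d) ℂ) *
    (M : Matrix (Fin d) (Fin d) ℂ))‖ ^ 2

/-- A weighted unitary `t`-design: a nonempty finite set with positive weights summing to `1`
that averages every `f ∈ Hom(t,t)` correctly. -/
def IsWeightedDesign (d t : ℕ) (μ : Measure (UG d)) (X : Finset (UG d)) (w : UG d → ℝ) : Prop :=
  X.Nonempty ∧ (∀ U ∈ X, 0 < w U) ∧ (∑ U ∈ X, w U = 1) ∧
    ∀ f ∈ homSpace d t t, ∑ U ∈ X, (w U : ℂ) * f U = ∫ U, f U ∂μ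

instance {n 𝕜 : Type*} [Fintype n] [DecidableEq n] [RCLike 𝕜] :
    CompactSpace (Matrix.unitaryGroup n 𝕜) := by
  refine isCompact_iff_compactSpace.mp <|
    (isCompact_univ_pi fun _ => isCompact_univ_pi fun _ => ProperSpace.isCompact_closedBall
      (0 : 𝕜) 1).of_isClosed_subset (isClosed_unitary (R := Matrix n n 𝕜)) fun U hU => ?_
  simpa using fun i j => entry_norm_bound_of_unitary hU i j

lemma continuous_of_mem_homSpace {d r s : ℕ} {f : UG d → ℂ} (hf : f ∈ homSpace d r s) :
    Continuous f := by
  induction hf using Submodule.span_induction with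
  | mem g hg =>
    obtain ⟨i, j, p, q, rfl⟩ := hg
    exact (continuous_finsetProd _ fun k _ =>
        Continuous.matrix_elem continuous_subtype_val _ _).mul
      (continuous_finsetProd _ fun k _ =>
        Complex.continuous_conj.comp (Continuous.matrix_elem continuous_subtype_val _ _))
  | zero => exact continuous_const
  | add _ _ _ _ hf hg => exact hf.add hg
  | smul c _ _ hf => exact hf.const_smul c

lemma star_mem_homSpace {d r s : ℕ} {f : UG d → ℂ} (hf : f ∈ homSpace d r s) :
    star f ∈ homSpace d s r := by
  have := Submodule.mem_map_of_mem (f := (starLinearEquiv ℂ : (UG d → ℂ) ≃ₗ⋆[ℂ] _).toLinearMap) hf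
  rw [homSpace, Submodule.map_span] at this
  refine Submodule.span_mono ?_ this
  rintro _ ⟨_, ⟨i, j, p, q, rfl⟩, rfl⟩
  refine ⟨p, q, i, j, funext fun U => ?_⟩
  simp [mul_comm]

lemma mul_mem_homSpace {d r s r' s' : ℕ} {f g : UG d → ℂ}
    (hf : f ∈ homSpace d r s) (hg : g ∈ homSpace d r' s') :
    f * g ∈ homSpace d (r + r') (s + s') := by
  have := Submodule.mul_mem_mul hf hg
  rw [homSpace, homSpace, Submodule.span_mul_span] at this
  refine Submodule.span_mono ?_ this
  rintro _ ⟨_, ⟨i, j, p, q, rfl⟩, _, ⟨i', j', p', q', rfl⟩, rfl⟩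
  refine ⟨Fin.append i i', Fin.append j j', Fin.append p p', Fin.append q q', funext fun U => ?_⟩
  simp only [Pi.mul_apply, Fin.prod_univ_add, Fin.append_left, Fin.append_right]
  ring

lemma eq_zero_of_integral_mul_conj_eq_zero {α 𝕜 : Type*} [TopologicalSpace α] [CompactSpace α]
    [MeasurableSpace α] [OpensMeasurableSpace α] {μ : Measure α} [μ.IsOpenPosMeasure]
    [IsFiniteMeasureOnCompacts μ] [RCLike 𝕜] {f : α → 𝕜} (hf : Continuous f)
    (h : ∫ x, f x * starRingEnd 𝕜 (f x) ∂μ = 0) : f = 0 := by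
  simp_rw [RCLike.mul_conj, ← RCLike.ofReal_pow] at h
  rw [integral_ofReal, RCLike.ofReal_eq_zero] at h
  by_contra hne
  obtain ⟨x, hx⟩ := Function.ne_iff.mp hne
  have hcont : Continuous fun x => ‖f x‖ ^ 2 := by fun_prop
  exact (hcont.integral_pos_of_hasCompactSupport_nonneg_nonzero (μ := μ)
    (.of_compactSpace _) (fun x => by positivity) (x := x) (by simpa using hx)).ne' h

lemma IsWeightedDesign.eq_zero_of_forall_mem_eq_zero {d r s : ℕ} {μ : Measure (UG d)}
    [μ.IsHaarMeasure] {X : Finset (UG d)} {w : UG d → ℝ}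
    (hX : IsWeightedDesign d (r + s) μ X w) {f : UG d → ℂ} (hf : f ∈ homSpace d r s)
    (hfX : ∀ U ∈ X, f U = 0) : f = 0 := by
  refine eq_zero_of_integral_mul_conj_eq_zero (μ := μ) (continuous_of_mem_homSpace hf) ?_
  have hmem : f * star f ∈ homSpace d (r + s) (r + s) := by
    simpa only [add_comm s r] using mul_mem_homSpace hf (star_mem_homSpace hf)
  calc ∫ U, f U * starRingEnd ℂ (f U) ∂μ
      = ∑ U ∈ X, (w U : ℂ) * (f * star f) U := (hX.2.2.2 _ hmem).symm
    _ = 0 := Finset.sum_eq_zero fun U hU => by simp [hfX U hU]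

theorem stmt_17_general (d t : ℕ)
    (μ : Measure (UG d)) [μ.IsHaarMeasure]
    (X : Finset (UG d)) (w : UG d → ℝ)
    (hX : IsWeightedDesign d t μ X w) :
    Module.finrank ℂ (homSpace d ((t + 1) / 2) (t / 2)) ≤ X.card := by
  have hX' : IsWeightedDesign d ((t + 1) / 2 + t / 2) μ X w := by
    rwa [show (t + 1) / 2 + t / 2 = t by omega]
  let restrict :=
    (LinearMap.funLeft ℂ ℂ ((↑) : X → UG d)).comp (homSpace d ((t + 1) / 2) (t / 2)).subtype
  have hinj : Function.Injective restrict := by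
    rw [← LinearMap.ker_eq_bot, LinearMap.ker_eq_bot']
    intro f hf
    exact Subtype.ext <| hX'.eq_zero_of_forall_mem_eq_zero f.2 fun U hU => congrFun hf ⟨U, hU⟩
  simpa using LinearMap.finrank_le_finrank_of_injective hinj

theorem stmt_17 (d t : ℕ) (ht : 1 ≤ t)
    (μ : Measure (UG d)) [μ.IsHaarMeasure] [IsProbabilityMeasure μ]
    (X : Finset (UG d)) (w : UG d → ℝ)
    (hX : IsWeightedDesign d t μ X w) :
    Module.finrank ℂ (homSpace d ((t + 1) / 2) (t / 2)) ≤ X.card :=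
  stmt_17_general d t μ X w hX
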